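/- arXiv:1608.08282 — 3 statements merged into one kernel-verified Lean document; each statement's English description precedes it below -/
import Mathlib

section
/- Let k be an algebraically closed field, V a k-vector space, and T a linear transformation of V. Then T is triangularizable if and only if every finite-dimensional subspace of V is contained in a finite-dimensional T-invariant subspace of V. -/
/-!
If `T` is triangular for a well-ordered basis, well-founded induction shows that every basis
vector lies in a finite-dimensional invariant subspace: `T bᵢ` lies in `k bᵢ` plus the span of
finitely many earlier basis vectors. Sums of such subspaces are again invariant, so every
finite-dimensional subspace lies in one.

Conversely, let `U ≠ V` be invariant and pick `v ∉ U` in a finite-dimensional invariant `F`.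
As `k` is algebraically closed, `T` has an eigenvector on `F / (F ⊓ U)`, i.e. there is `w ∉ U`
with `T w ∈ U + k w`. Adjoining such vectors transfinitely along a well-order larger than `V`
gives a chain of invariant spans, which cannot stay proper forever; the vectors chosen before it
reaches `V` form a triangular basis.
-/

universe u v

/-- A linear transformation `T` is *triangularizable* if `V` has a basis `b` indexed by a
well-ordered set (with strict order `r`) such that `T (b i)` lies in the span of
`{b j : j ≤ i}` for every index `i`. -/
def Triangularizable {k : Type u} {V : Type v} [Field k] [AddCommGroup V] [Module k V]
    (T : Module.End k V) : Prop :=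
  ∃ (ι : Type v) (r : ι → ι → Prop) (b : Module.Basis ι k V),
    IsWellOrder ι r ∧ ∀ i, T (b i) ∈ Submodule.span k (⇑b '' {j | r j i ∨ j = i})

open Submodule Set

section

variable {k : Type u} {V : Type v} [Field k] [AddCommGroup V] [Module k V]

theorem linearIndependent_of_notMem_span_image_Iio {ι : Type*} [LinearOrder ι]
    {b : ι → V} (hb : ∀ i, b i ∉ span k (b '' Iio i)) : LinearIndependent k b := by
  rw [linearIndependent_iff_finset_linearIndependent]
  intro s
  induction s using Finset.induction_on_max with
  | empty => exact linearIndependent_empty_type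
  | insert a s ha ih =>
    have : LinearIndepOn k b (insert a ↑s) :=
      LinearIndepOn.insert ih fun h => hb a (span_mono (image_mono fun x hx => ha x hx) h)
    rwa [← Finset.coe_insert] at this

theorem triangularizable_of_apply_mem_span_image_Iic {T : Module.End k V} {ι : Type v}
    [LinearOrder ι] [WellFoundedLT ι] {b : ι → V} (hb : ∀ i, b i ∉ span k (b '' Iio i))
    (hspan : span k (range b) = ⊤) (htri : ∀ i, T (b i) ∈ span k (b '' Iic i)) :
    Triangularizable T := by
  refine ⟨ι, (· < ·), .mk (linearIndependent_of_notMem_span_image_Iio hb) hspan.ge,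
    isWellOrder_lt, fun i => ?_⟩
  simp only [Module.Basis.coe_mk, ← le_iff_lt_or_eq]
  exact htri i

end

namespace Module.End

variable {k : Type u} {V : Type v} [Field k] [AddCommGroup V] [Module k V]

def IsLocallyFinite (T : Module.End k V) : Prop :=
  ∀ v : V, ∃ U : Submodule k V, FiniteDimensional k U ∧ v ∈ U ∧ U ∈ T.invtSubmodule

variable {T : Module.End k V}

theorem exists_finiteDimensional_invtSubmodule_ge_span {s : Set V} (hs : s.Finite)
    (h : ∀ v ∈ s, ∃ U : Submodule k V, FiniteDimensional k U ∧ v ∈ U ∧ U ∈ T.invtSubmodule) :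
    ∃ U : Submodule k V, FiniteDimensional k U ∧ span k s ≤ U ∧ U ∈ T.invtSubmodule := by
  induction s, hs using Set.Finite.induction_on with
  | empty => exact ⟨⊥, inferInstance, by simp, invtSubmodule.bot_mem T⟩
  | @insert a s _ _ ih =>
    obtain ⟨Ua, _, haU, hUa⟩ := h a (mem_insert a s)
    obtain ⟨Us, _, hsU, hUs⟩ := ih fun v hv => h v (mem_insert_of_mem a hv)
    refine ⟨Ua ⊔ Us, inferInstance, ?_, invtSubmodule.sup_mem hUa hUs⟩
    rw [span_insert]
    exact sup_le_sup ((span_singleton_le_iff_mem a Ua).2 haU) hsU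

theorem isLocallyFinite_iff_forall_finiteDimensional_le :
    T.IsLocallyFinite ↔ ∀ W : Submodule k V, FiniteDimensional k W →
      ∃ U : Submodule k V, FiniteDimensional k U ∧ W ≤ U ∧ U ∈ T.invtSubmodule := by
  refine ⟨fun hT W hW => ?_, fun h v => ?_⟩
  · obtain ⟨s, hs, rfl⟩ := fg_def.1 ((fg_iff_finiteDimensional W).2 hW)
    exact exists_finiteDimensional_invtSubmodule_ge_span hs fun v _ => hT v
  · obtain ⟨U, hU, hvU, hUinv⟩ := h (span k {v}) inferInstance
    exact ⟨U, hU, hvU (mem_span_singleton_self v), hUinv⟩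

theorem isLocallyFinite_of_forall_mem_basis {ι : Type*} (b : Module.Basis ι k V)
    (h : ∀ i, ∃ U : Submodule k V, FiniteDimensional k U ∧ b i ∈ U ∧ U ∈ T.invtSubmodule) :
    T.IsLocallyFinite := fun v => by
  obtain ⟨U, hU, hvU, hUinv⟩ := exists_finiteDimensional_invtSubmodule_ge_span
    (Set.Finite.image b (b.repr v).support.finite_toSet) (by rintro _ ⟨i, -, rfl⟩; exact h i)
  exact ⟨U, hU, hvU (b.mem_span_image.2 subset_rfl), hUinv⟩

theorem sup_span_singleton_mem_invtSubmodule {U : Submodule k V} (hU : U ∈ T.invtSubmodule)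
    {v : V} (hv : T v ∈ U ⊔ span k {v}) : U ⊔ span k {v} ∈ T.invtSubmodule := by
  rw [mem_invtSubmodule_iff_map_le, Submodule.map_sup, map_span, image_singleton]
  exact sup_le (((mem_invtSubmodule_iff_map_le T).1 hU).trans le_sup_left)
    ((span_singleton_le_iff_mem _ _).2 hv)

theorem _root_.Triangularizable.isLocallyFinite (hT : Triangularizable T) :
    T.IsLocallyFinite := by
  obtain ⟨ι, r, b, hr, htri⟩ := hT
  refine isLocallyFinite_of_forall_mem_basis b fun i => ?_
  induction i using hr.wf.induction with
  | _ i ih =>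
  have hsplit : T (b i) ∈ span k {b i} ⊔ span k (b '' {j | r j i}) := by
    have : {j | r j i ∨ j = i} = insert i {j | r j i} := by ext; simp [or_comm]
    simpa only [this, image_insert_eq, span_insert] using htri i
  obtain ⟨y, hy, z, hz, hyz⟩ := mem_sup.1 hsplit
  obtain ⟨t, htr, hzt⟩ := mem_span_finite_of_mem_span hz
  obtain ⟨U, _, htU, hU⟩ := exists_finiteDimensional_invtSubmodule_ge_span t.finite_toSet
    fun v hv => by obtain ⟨j, hj, rfl⟩ := htr hv; exact ih j hj
  refine ⟨U ⊔ span k {b i}, inferInstance, mem_sup_right (mem_span_singleton_self _),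
    sup_span_singleton_mem_invtSubmodule hU ?_⟩
  rw [← hyz]
  exact add_mem (mem_sup_right hy) (mem_sup_left (htU hzt))

theorem exists_notMem_sub_smul_mem [IsAlgClosed k] {F U : Submodule k V} [FiniteDimensional k F]
    (hF : F ∈ T.invtSubmodule) (hU : U ∈ T.invtSubmodule) (hFU : ¬F ≤ U) :
    ∃ w ∈ F, w ∉ U ∧ ∃ c : k, T w - c • w ∈ U := by
  set p : Submodule k F := U.comap F.subtype
  have hp : p ≤ p.comap (T.restrict hF) := fun x hx => hU hx
  have : Nontrivial (F ⧸ p) := Submodule.Quotient.nontrivial_iff.2 fun h => hFU fun x hx =>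
    show (⟨x, hx⟩ : F) ∈ p from h ▸ mem_top
  obtain ⟨c, hc⟩ := exists_eigenvalue (p.mapQ p (T.restrict hF) hp)
  obtain ⟨x, hx⟩ := hc.exists_hasEigenvector
  obtain ⟨w, rfl⟩ := p.mkQ_surjective x
  refine ⟨w, w.2, fun hw => hx.2 ((Submodule.Quotient.mk_eq_zero p).2 hw), c, ?_⟩
  have := hx.apply_eq_smul
  rwa [mkQ_apply, mapQ_apply, ← Submodule.Quotient.mk_smul, Submodule.Quotient.eq] at this

theorem IsLocallyFinite.exists_notMem_apply_mem_sup [IsAlgClosed k] (hT : T.IsLocallyFinite)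
    {U : Submodule k V} (hU : U ∈ T.invtSubmodule) (hne : U ≠ ⊤) :
    ∃ w ∉ U, T w ∈ U ⊔ span k {w} := by
  obtain ⟨v, hv⟩ : ∃ v, v ∉ U := by
    contrapose! hne
    exact eq_top_iff'.2 hne
  obtain ⟨F, _, hvF, hF⟩ := hT v
  obtain ⟨w, -, hwU, c, hc⟩ := exists_notMem_sub_smul_mem hF hU fun h => hv (h hvF)
  refine ⟨w, hwU, ?_⟩
  rw [← sub_add_cancel (T w) (c • w)]
  exact add_mem (mem_sup_left hc) (mem_sup_right (smul_mem _ c (mem_span_singleton_self w)))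

section TriangularSeq

variable {ι : Type*} [LinearOrder ι] [WellFoundedLT ι]

/- Each vector extends the span of the earlier ones as in
`IsLocallyFinite.exists_notMem_apply_mem_sup`; once that span is everything, `ε` returns junk. -/
variable (T) in
noncomputable def triangularSeq : ι → V :=
  wellFounded_lt.fix fun i seq =>
    let U := span k (range fun j : Iio i => seq j j.2)
    Classical.epsilon fun w => w ∉ U ∧ T w ∈ U ⊔ span k {w}

theorem triangularSeq_eq (i : ι) :
    triangularSeq T i =
      let U := span k (triangularSeq T '' Iio i)
      Classical.epsilon fun w => w ∉ U ∧ T w ∈ U ⊔ span k {w} := by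
  rw [triangularSeq, WellFounded.fix_eq, image_eq_range]

variable [IsAlgClosed k]

theorem triangularSeq_spec_of_mem_invtSubmodule (hT : T.IsLocallyFinite) {i : ι}
    (hinv : span k (triangularSeq T '' Iio i) ∈ T.invtSubmodule)
    (hne : span k (triangularSeq T '' Iio i) ≠ ⊤) :
    triangularSeq T i ∉ span k (triangularSeq T '' Iio i) ∧
      T (triangularSeq T i) ∈ span k (triangularSeq T '' Iic i) := by
  rw [← Iio_insert, image_insert_eq, span_insert, sup_comm, triangularSeq_eq]
  exact Classical.epsilon_spec (hT.exists_notMem_apply_mem_sup hinv hne)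

theorem span_triangularSeq_Iio_mem_invtSubmodule (hT : T.IsLocallyFinite) (i : ι) :
    span k (triangularSeq T '' Iio i) ∈ T.invtSubmodule := by
  induction i using WellFoundedLT.induction with
  | _ i ih =>
  by_cases htop : span k (triangularSeq T '' Iio i) = ⊤
  · exact htop ▸ invtSubmodule.top_mem T
  rw [mem_invtSubmodule_iff_map_le, map_span_le]
  rintro _ ⟨j, hj, rfl⟩
  have hne : span k (triangularSeq T '' Iio j) ≠ ⊤ := fun h =>
    htop (top_unique (h ▸ span_mono (image_mono (Iio_subset_Iio hj.le))))
  exact span_mono (image_mono (Iic_subset_Iio.2 hj))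
    (triangularSeq_spec_of_mem_invtSubmodule hT (ih j hj) hne).2

theorem triangularSeq_spec (hT : T.IsLocallyFinite) {i : ι}
    (hne : span k (triangularSeq T '' Iio i) ≠ ⊤) :
    triangularSeq T i ∉ span k (triangularSeq T '' Iio i) ∧
      T (triangularSeq T i) ∈ span k (triangularSeq T '' Iic i) :=
  triangularSeq_spec_of_mem_invtSubmodule hT (span_triangularSeq_Iio_mem_invtSubmodule hT i) hne

theorem injective_triangularSeq (hT : T.IsLocallyFinite)
    (hne : ∀ i : ι, span k (triangularSeq T '' Iio i) ≠ ⊤) :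
    Function.Injective (triangularSeq T : ι → V) := by
  refine .of_lt_imp_ne fun i j hij heq => (triangularSeq_spec hT (hne j)).1 ?_
  exact heq ▸ subset_span (mem_image_of_mem _ hij)

theorem triangularizable_of_span_triangularSeq_eq_top {κ : Type v} [LinearOrder κ]
    [WellFoundedLT κ] (hT : T.IsLocallyFinite) {i : κ}
    (htop : span k (triangularSeq T '' Iio i) = ⊤) : Triangularizable T := by
  obtain ⟨i₀, htop₀, hmin⟩ := wellFounded_lt.has_min {i | span k (triangularSeq T '' Iio i) = ⊤}
    ⟨i, htop⟩
  have hne (j : Iio i₀) : span k (triangularSeq T '' Iio j.1) ≠ ⊤ := fun h => hmin j h j.2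
  refine triangularizable_of_apply_mem_span_image_Iic
    (b := triangularSeq T ∘ ((↑) : Iio i₀ → κ)) (fun j => ?_) ?_ (fun j => ?_)
  · rw [image_comp, image_subtype_val_Iio_Iio]
    exact (triangularSeq_spec hT (hne j)).1
  · rwa [range_comp, Subtype.range_coe]
  · rw [image_comp, image_subtype_val_Iio_Iic]
    exact (triangularSeq_spec hT (hne j)).2

end TriangularSeq

theorem IsLocallyFinite.triangularizable [IsAlgClosed k] (hT : T.IsLocallyFinite) :
    Triangularizable T := by
  -- an injective sequence indexed by this type would give `#V < succ #V ≤ #V`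
  obtain ⟨i, htop⟩ : ∃ i : (Order.succ (Cardinal.mk V)).ord.ToType,
      span k (triangularSeq T '' Iio i) = ⊤ := by
    by_contra! hne
    have := Cardinal.mk_le_of_injective (injective_triangularSeq hT hne)
    rw [Cardinal.mk_ord_toType] at this
    exact (Order.lt_succ _).not_ge this
  exact triangularizable_of_span_triangularSeq_eq_top hT htop

end Module.End

/-- Over an algebraically closed field, `T` is triangularizable iff every finite-dimensional
subspace of `V` is contained in a finite-dimensional `T`-invariant subspace of `V`. -/
theorem triangularizable_iff_forall_finiteDimensional_le_invariant
    {k : Type u} {V : Type v} [Field k] [IsAlgClosed k] [AddCommGroup V] [Module k V]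
    (T : Module.End k V) :
    Triangularizable T ↔
      ∀ W : Submodule k V, FiniteDimensional k W →
        ∃ U : Submodule k V, FiniteDimensional k U ∧ W ≤ U ∧ ∀ v ∈ U, T v ∈ U :=
  (Iff.intro Triangularizable.isLocallyFinite Module.End.IsLocallyFinite.triangularizable).trans
    Module.End.isLocallyFinite_iff_forall_finiteDimensional_le
end

section
/- Let k be a field, V a k-vector space, and X a finite set of pairwise commuting linear transformations of V. If every element of X is triangularizable, then there exists a basis (b_i)_{i∈I} of V indexed by a well-ordered set I such that every element of X is triangular with respect to (b_i)_{i∈I}. -/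
universe u v w

open Polynomial

/-!
A triangular map `T` is locally split: by well-founded induction along the basis, every vector
is killed by a product of factors `T - μ`. For a finite commuting family of such maps this makes
`V` the direct sum of the joint generalized eigenspaces `W χ`, each preserved by every map. On
`W χ` the maps `T - χ T` commute and are locally nilpotent, so the filtration `F 0 = 0`,
`F (n + 1) = {v | (T - χ T) v ∈ F n for all T}` exhausts `W χ`. Take a basis of each `W χ`
adapted to its filtration, and order the union of these bases block by block, and inside a
block by filtration level: every map of the family is triangular for this order.
-/

namespace Module.Basis

variable {ι ι' k V : Type*} [Field k] [AddCommGroup V] [Module k V]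

def IsTriangular (b : Basis ι k V) (r : ι → ι → Prop) (T : Module.End k V) : Prop :=
  ∀ i, T (b i) ∈ Submodule.span k (b '' {j | r j i ∨ j = i})

variable {b : Basis ι k V} {r : ι → ι → Prop} {T : Module.End k V}

lemma isTriangular_iff :
    b.IsTriangular r T ↔
      ∀ i, ∃ c : k, T (b i) - c • b i ∈ Submodule.span k (b '' {j | r j i}) := by
  refine forall_congr' fun i ↦ ?_
  rw [Set.ofPred_or, Set.image_union, Submodule.span_union, Set.ofPred_eq_eq_singleton,
    Set.image_singleton, Submodule.mem_sup]
  constructor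
  · rintro ⟨y, hy, z, hz, hyz⟩
    obtain ⟨c, rfl⟩ := Submodule.mem_span_singleton.mp hz
    exact ⟨c, by rwa [← hyz, add_sub_cancel_right]⟩
  · rintro ⟨c, hc⟩
    exact ⟨_, hc, c • b i, Submodule.smul_mem _ _ (Submodule.mem_span_singleton_self _),
      sub_add_cancel _ _⟩

lemma IsTriangular.reindex (h : b.IsTriangular r T) (e : ι ≃ ι') :
    (b.reindex e).IsTriangular (e.symm ⁻¹'o r) T := by
  intro i
  rw [coe_reindex, Set.image_comp, Function.comp_apply]
  convert h (e.symm i) using 4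
  ext j
  simp [Order.Preimage, ← Equiv.eq_symm_apply]

end Module.Basis

namespace Module.End

section SplitTorsion

variable {ι k V : Type*} [Field k] [AddCommGroup V] [Module k V] {f : End k V}

def splitTorsion (f : End k V) : Submodule k V where
  carrier := {v | ∃ s : Multiset k, aeval f (s.map (X - C ·)).prod v = 0}
  add_mem' := by
    rintro v w ⟨s, hs⟩ ⟨t, ht⟩
    refine ⟨s + t, ?_⟩
    rw [Multiset.map_add, Multiset.prod_add, map_add]
    nth_rw 1 [mul_comm]
    simp only [map_mul, mul_apply, hs, ht, map_zero, add_zero]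
  zero_mem' := ⟨0, map_zero _⟩
  smul_mem' := by
    rintro c v ⟨s, hs⟩
    exact ⟨s, by rw [map_smul, hs, smul_zero]⟩

lemma mem_splitTorsion_of_sub_apply_mem {μ : k} {v : V}
    (h : (f - algebraMap k (End k V) μ) v ∈ f.splitTorsion) : v ∈ f.splitTorsion := by
  obtain ⟨s, hs⟩ := h
  refine ⟨μ ::ₘ s, ?_⟩
  rwa [Multiset.map_cons, Multiset.prod_cons, mul_comm, map_mul, mul_apply, map_sub, aeval_X,
    aeval_C]

lemma ker_aeval_pow_X_sub_C_le_maxGenEigenspace (μ : k) (n : ℕ) :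
    LinearMap.ker (aeval f ((X - C μ) ^ n)) ≤ f.maxGenEigenspace μ := fun v hv ↦
  (f.mem_maxGenEigenspace μ v).mpr ⟨n, by
    simpa [Algebra.algebraMap_eq_smul_one] using hv⟩

lemma ker_aeval_prod_X_sub_C_le_iSup_maxGenEigenspace (s : Finset k) (n : k → ℕ) :
    LinearMap.ker (aeval f (∏ μ ∈ s, (X - C μ) ^ n μ)) ≤
      ⨆ μ, f.maxGenEigenspace μ := by
  classical
  induction s using Finset.induction_on with
  | empty => simp [one_eq_id]
  | insert μ s hμ ih =>
    have hcop : IsCoprime ((X - C μ) ^ n μ) (∏ ν ∈ s, (X - C ν) ^ n ν) :=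
      IsCoprime.prod_right fun ν hν ↦ IsCoprime.pow <|
        isCoprime_X_sub_C_of_isUnit_sub (sub_ne_zero.mpr (ne_of_mem_of_not_mem hν hμ).symm).isUnit
    rw [Finset.prod_insert hμ, ← sup_ker_aeval_eq_ker_aeval_mul_of_coprime f hcop]
    exact sup_le ((ker_aeval_pow_X_sub_C_le_maxGenEigenspace μ _).trans (le_iSup _ μ)) ih

lemma splitTorsion_le_iSup_maxGenEigenspace : f.splitTorsion ≤ ⨆ μ, f.maxGenEigenspace μ := by
  classical
  rintro v ⟨s, hs⟩
  rw [Finset.prod_multiset_map_count] at hs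
  exact ker_aeval_prod_X_sub_C_le_iSup_maxGenEigenspace _ _ hs

lemma splitTorsion_eq_top_of_isTriangular {r : ι → ι → Prop} (hr : WellFounded r)
    {b : Basis ι k V} (hb : b.IsTriangular r f) : f.splitTorsion = ⊤ := by
  have hmem : ∀ i, b i ∈ f.splitTorsion := fun i ↦ by
    induction i using hr.induction with
    | _ i ih =>
    obtain ⟨c, hc⟩ := Basis.isTriangular_iff.mp hb i
    refine mem_splitTorsion_of_sub_apply_mem (μ := c) ?_
    rw [LinearMap.sub_apply, algebraMap_end_apply]
    refine Submodule.span_le.mpr ?_ hc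
    rintro _ ⟨j, hj, rfl⟩
    exact ih j hj
  rw [eq_top_iff, ← b.span_eq, Submodule.span_le]
  rintro _ ⟨i, rfl⟩
  exact hmem i

lemma aeval_restrict_apply {p : Submodule k V} (hp : ∀ x ∈ p, f x ∈ p) (P : k[X]) (v : p) :
    (aeval (f.restrict hp) P v : V) = aeval f P v := by
  induction P using Polynomial.induction_on' with
  | add P Q hP hQ => simp only [map_add, LinearMap.add_apply, Submodule.coe_add, hP, hQ]
  | monomial n c => simp [aeval_monomial, pow_restrict n hp, LinearMap.coe_restrict_apply]

lemma splitTorsion_restrict_eq_top (hf : f.splitTorsion = ⊤) {p : Submodule k V}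
    (hp : ∀ x ∈ p, f x ∈ p) : splitTorsion (f.restrict hp) = ⊤ := by
  refine eq_top_iff.mpr fun v _ ↦ ?_
  obtain ⟨s, hs⟩ : (v : V) ∈ f.splitTorsion := hf ▸ Submodule.mem_top
  exact ⟨s, Subtype.ext <| by rw [aeval_restrict_apply, hs, Submodule.coe_zero]⟩

lemma le_iSup_inf_maxGenEigenspace (hf : f.splitTorsion = ⊤) {p : Submodule k V}
    (hp : ∀ x ∈ p, f x ∈ p) : p ≤ ⨆ μ, p ⊓ f.maxGenEigenspace μ := by
  have htop : ⊤ ≤ ⨆ μ, maxGenEigenspace (f.restrict hp) μ :=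
    (splitTorsion_restrict_eq_top hf hp).ge.trans splitTorsion_le_iSup_maxGenEigenspace
  calc p = (⊤ : Submodule k p).map p.subtype := by simp
    _ ≤ (⨆ μ, maxGenEigenspace (f.restrict hp) μ).map p.subtype := Submodule.map_mono htop
    _ = ⨆ μ, p ⊓ f.maxGenEigenspace μ := by
      simp_rw [Submodule.map_iSup, Submodule.inf_genEigenspace f p hp]

lemma iSup_iInf_maxGenEigenspace_eq_top_of_splitTorsion_eq_top [Finite ι] (f : ι → End k V)
    (hcomm : ∀ i j, Commute (f i) (f j)) (hf : ∀ i, (f i).splitTorsion = ⊤) :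
    ⨆ χ : ι → k, ⨅ i, (f i).maxGenEigenspace (χ i) = ⊤ := by
  classical
  cases nonempty_fintype ι
  suffices ∀ s : Finset ι, ⨆ χ : ι → k, ⨅ i ∈ s, (f i).maxGenEigenspace (χ i) = ⊤ by
    simpa using this Finset.univ
  intro s
  induction s using Finset.induction_on with
  | empty => simp
  | insert a s ha ih =>
    refine eq_top_iff.mpr <| ih.ge.trans <| iSup_le fun χ ↦ ?_
    have hinv : ∀ x ∈ ⨅ i ∈ s, (f i).maxGenEigenspace (χ i),
        f a x ∈ ⨅ i ∈ s, (f i).maxGenEigenspace (χ i) := by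
      simp only [Submodule.mem_iInf]
      exact fun x hx i hi ↦ mapsTo_maxGenEigenspace_of_comm (hcomm i a) _ (hx i hi)
    refine (le_iSup_inf_maxGenEigenspace (hf a) hinv).trans <| iSup_le fun μ ↦ ?_
    refine le_iSup_of_le (Function.update χ a μ) ?_
    rw [Finset.iInf_insert, Function.update_self, inf_comm]
    refine inf_le_inf_left _ (iInf₂_mono fun i hi ↦ ?_)
    rw [Function.update_of_ne (ne_of_mem_of_not_mem hi ha)]

end SplitTorsion

section IterateJointKer

variable {ι R M : Type*} [Semiring R] [AddCommMonoid M] [Module R M] (N : ι → End R M)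

def iterateJointKer : ℕ → Submodule R M
  | 0 => ⊥
  | n + 1 => ⨅ i, (iterateJointKer n).comap (N i)

@[simp]
lemma iterateJointKer_zero : iterateJointKer N 0 = ⊥ := rfl

lemma mem_iterateJointKer_succ {n : ℕ} {v : M} :
    v ∈ iterateJointKer N (n + 1) ↔ ∀ i, N i v ∈ iterateJointKer N n := by
  simp [iterateJointKer]

lemma iterateJointKer_monotone : Monotone (iterateJointKer N) := by
  refine monotone_nat_of_le_succ fun n ↦ ?_
  induction n with
  | zero => exact bot_le
  | succ n ih =>
    exact fun v hv ↦ (mem_iterateJointKer_succ N).mpr fun i ↦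
      ih ((mem_iterateJointKer_succ N).mp hv i)

variable {N}

lemma mem_iterateJointKer_of_pow_apply_eq_zero [Fintype ι] (hcomm : ∀ i j, Commute (N i) (N j))
    {m : ι → ℕ} {v : M} (hv : ∀ i, (N i ^ m i) v = 0) :
    v ∈ iterateJointKer N (∑ i, m i + 1) := by
  classical
  induction h : ∑ i, m i generalizing m v with
  | zero =>
    refine (mem_iterateJointKer_succ N).mpr fun i ↦ ?_
    have hv0 := hv i
    rw [Finset.sum_eq_zero_iff.mp h i (Finset.mem_univ i), pow_zero, one_apply] at hv0
    simp [hv0]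
  | succ n ih =>
    refine (mem_iterateJointKer_succ N).mpr fun i ↦ ?_
    cases hmi : m i with
    | zero =>
      have hv0 := hv i
      rw [hmi, pow_zero, one_apply] at hv0
      simp [hv0]
    | succ l =>
      refine ih (m := Function.update m i l) (fun j ↦ ?_) ?_
      · rcases eq_or_ne j i with rfl | hji
        · rw [Function.update_self, ← mul_apply, ← pow_succ, ← hmi, hv]
        · rw [Function.update_of_ne hji, ← mul_apply, ((hcomm j i).pow_left _).eq, mul_apply,
            hv, map_zero]
      · rw [Finset.sum_eq_add_sum_sdiff_singleton_of_mem (Finset.mem_univ i), hmi] at h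
        rw [Finset.sum_update_of_mem (Finset.mem_univ i)]
        omega

lemma exists_mem_iterateJointKer [Finite ι] (hcomm : ∀ i j, Commute (N i) (N j))
    (hnil : ∀ i v, ∃ m : ℕ, (N i ^ m) v = 0) (v : M) : ∃ n, v ∈ iterateJointKer N n := by
  cases nonempty_fintype ι
  choose m hm using fun i ↦ hnil i v
  exact ⟨_, mem_iterateJointKer_of_pow_apply_eq_zero hcomm hm⟩

end IterateJointKer

end Module.End

section LevelBasis

variable {K : Type*} {M : Type w} [DivisionRing K] [AddCommGroup M] [Module K M]

lemma exists_linearIndepOn_chain {F : ℕ → Submodule K M} (hF : Monotone F) :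
    ∃ s : ℕ → Set M,
      Monotone s ∧ ∀ n, LinearIndepOn K id (s n) ∧ Submodule.span K (s n) = F n := by
  let Spanning n := {t : Set M // LinearIndepOn K id t ∧ Submodule.span K t = F n}
  have extend : ∀ n (t : Spanning n), ∃ t' : Spanning (n + 1), t.1 ⊆ t'.1 := by
    rintro n ⟨t, ht, hspan⟩
    have htF : t ⊆ F (n + 1) := Submodule.subset_span.trans (hspan ▸ hF n.le_succ)
    obtain ⟨t', ht'F, htt', hFt', ht'⟩ := exists_linearIndepOn_id_extension ht htF
    exact ⟨⟨t', ht', le_antisymm (Submodule.span_le.mpr ht'F) fun x hx ↦ hFt' hx⟩, htt'⟩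
  choose next hnext using extend
  obtain ⟨t₀, -, ht₀span, ht₀⟩ := exists_linearIndependent K (F 0 : Set M)
  let s : ∀ n, Spanning n := fun n ↦
    Nat.rec ⟨t₀, ht₀, by rw [ht₀span, Submodule.span_eq]⟩ next n
  exact ⟨fun n ↦ (s n).1, monotone_nat_of_le_succ fun n ↦ hnext n (s n), fun n ↦ (s n).2⟩

lemma exists_basis_level {F : ℕ → Submodule K M} (hF : Monotone F)
    (hexh : ∀ v, ∃ n, v ∈ F n) :
    ∃ (ι : Type w) (b : Module.Basis ι K M) (lvl : ι → ℕ),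
      (∀ j, b j ∈ F (lvl j)) ∧ ∀ n, F n ≤ Submodule.span K (b '' {j | lvl j ≤ n}) := by
  classical
  obtain ⟨s, hs, hsF⟩ := exists_linearIndepOn_chain hF
  have hli : LinearIndepOn K id (⋃ n, s n) :=
    linearIndepOn_iUnion_of_directed hs.directed_le fun n ↦ (hsF n).1
  have htop : ⊤ ≤ Submodule.span K (Set.range ((↑) : (⋃ n, s n) → M)) := by
    rw [Subtype.range_coe, Submodule.span_iUnion]
    intro v _
    obtain ⟨n, hn⟩ := hexh v
    exact Submodule.mem_iSup_of_mem n ((hsF n).2 ▸ hn)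
  let b := Module.Basis.mk hli htop
  refine ⟨_, b, fun j ↦ Nat.find (hexh j), fun j ↦ by simpa [b] using Nat.find_spec (hexh j),
    fun n ↦ ?_⟩
  rw [← (hsF n).2]
  refine Submodule.span_mono fun x hx ↦ ⟨⟨x, Set.mem_iUnion_of_mem n hx⟩, ?_, by simp [b]⟩
  exact Nat.find_min' _ ((hsF n).2 ▸ Submodule.subset_span hx)

lemma Module.End.exists_basis_apply_mem_span_lower_level {ι : Type*} [Finite ι]
    {N : ι → End K M} (hcomm : ∀ i j, Commute (N i) (N j))
    (hnil : ∀ i v, ∃ m : ℕ, (N i ^ m) v = 0) :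
    ∃ (κ : Type w) (b : Module.Basis κ K M) (lvl : κ → ℕ),
      ∀ i j, N i (b j) ∈ Submodule.span K (b '' {l | lvl l < lvl j}) := by
  obtain ⟨κ, b, lvl, hb, hF⟩ :=
    exists_basis_level (iterateJointKer_monotone N) (exists_mem_iterateJointKer hcomm hnil)
  refine ⟨κ, b, lvl, fun i j ↦ ?_⟩
  obtain ⟨n, hn⟩ : ∃ n, lvl j = n + 1 :=
    Nat.exists_eq_add_one.mpr <| Nat.pos_of_ne_zero fun h0 ↦
      b.ne_zero j (by simpa [h0] using hb j)
  refine Submodule.span_mono (Set.image_mono fun l hl ↦ ?_) <|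
    hF n ((mem_iterateJointKer_succ N).mp (hn ▸ hb j) i)
  simp only [Set.mem_ofPred_eq] at hl ⊢
  omega

end LevelBasis

namespace Module.End

variable {ι k : Type*} {V : Type v} [Field k] [AddCommGroup V] [Module k V] {f : ι → End k V}

lemma mapsTo_iInf_maxGenEigenspace (hcomm : ∀ i j, Commute (f i) (f j)) (χ : ι → k) (i : ι) :
    ∀ x ∈ ⨅ j, (f j).maxGenEigenspace (χ j), f i x ∈ ⨅ j, (f j).maxGenEigenspace (χ j) := by
  simp only [Submodule.mem_iInf]
  exact fun x hx j ↦ mapsTo_maxGenEigenspace_of_comm (hcomm j i) _ (hx j)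

lemma exists_basis_iInf_maxGenEigenspace_sub_smul_mem_span [Finite ι]
    (hcomm : ∀ i j, Commute (f i) (f j)) (χ : ι → k) :
    ∃ (κ : Type v) (b : Module.Basis κ k ↥(⨅ i, (f i).maxGenEigenspace (χ i))) (lvl : κ → ℕ),
      ∀ i j, f i (b j) - χ i • (b j : V) ∈
        Submodule.span k ((↑) ∘ b '' {l | lvl l < lvl j}) := by
  have hW := mapsTo_iInf_maxGenEigenspace hcomm χ
  obtain ⟨κ, b, lvl, hb⟩ :=
    exists_basis_apply_mem_span_lower_level (N := fun i ↦ (f i).restrict (hW i) - χ i • 1)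
      (fun i j ↦ ((LinearMap.restrict_commute (hcomm i j) _ _).sub_right
        ((Commute.one_right _).smul_right _)).sub_left ((Commute.one_left _).smul_left _))
      fun i v ↦ by
        rw [← mem_maxGenEigenspace, maxGenEigenspace, genEigenspace_restrict]
        exact (Submodule.mem_iInf _).mp v.2 i
  refine ⟨κ, b, lvl, fun i j ↦ ?_⟩
  rw [Set.image_comp]
  simpa [Submodule.map_span] using Submodule.mem_map_of_mem
    (f := (⨅ i, (f i).maxGenEigenspace (χ i)).subtype) (hb i j)

theorem exists_basis_isTriangular_of_commute [Finite ι] (f : ι → End k V)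
    (hcomm : ∀ i j, Commute (f i) (f j)) (hf : ∀ i, (f i).splitTorsion = ⊤) :
    ∃ (κ : Type v) (r : κ → κ → Prop) (b : Module.Basis κ k V),
      IsWellOrder κ r ∧ ∀ i, b.IsTriangular r (f i) := by
  classical
  have hint : DirectSum.IsInternal fun χ : ι → k ↦ ⨅ i, (f i).maxGenEigenspace (χ i) :=
    DirectSum.isInternal_submodule_of_iSupIndep_of_iSup_eq_top
      (independent_iInf_maxGenEigenspace_of_forall_mapsTo f fun i j φ ↦
        mapsTo_maxGenEigenspace_of_comm (hcomm j i) φ)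
      (iSup_iInf_maxGenEigenspace_eq_top_of_splitTorsion_eq_top f hcomm hf)
  choose κ b lvl hb using exists_basis_iInf_maxGenEigenspace_sub_smul_mem_span hcomm
  let B := hint.collectedBasis b
  let key : (Σ χ, κ χ) ↪ ((ι → k) × ℕ) × (Σ χ, κ χ) :=
    ⟨fun a ↦ ((a.1, lvl a.1 a.2), a), fun a a' h ↦ congrArg Prod.snd h⟩
  let R := key ⁻¹'o Prod.Lex (Prod.Lex WellOrderingRel (· < ·)) WellOrderingRel
  have : IsWellOrder _ R := (RelEmbedding.preimage key _).isWellOrder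
  have hB (i : ι) : B.IsTriangular R (f i) := by
    refine Basis.isTriangular_iff.mpr fun ⟨χ, j⟩ ↦ ⟨χ i, ?_⟩
    refine Submodule.span_mono ?_ (by simpa [B, hint.collectedBasis_coe] using hb χ i j)
    rintro _ ⟨l, hl, rfl⟩
    exact ⟨⟨χ, l⟩, Prod.Lex.left _ _ (Prod.Lex.right _ hl),
      by simp [B, hint.collectedBasis_coe]⟩
  exact ⟨_, _, B.reindex (Equiv.ofInjective B B.injective), inferInstance,
    fun i ↦ (hB i).reindex _⟩

end Module.End

lemma Triangularizable.splitTorsion_eq_top {k : Type u} {V : Type v} [Field k] [AddCommGroup V]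
    [Module k V] {T : Module.End k V} (h : Triangularizable T) : T.splitTorsion = ⊤ := by
  obtain ⟨ι, r, b, hr, hb⟩ := h
  exact Module.End.splitTorsion_eq_top_of_isTriangular hr.wf hb

/-- Any finite set of pairwise commuting triangularizable transformations of `V` is
simultaneously triangularizable: there is a basis of `V` indexed by a well-ordered set with
respect to which every element of `X` is triangular. -/
theorem simultaneous_triangularization
    {k : Type u} {V : Type v} [Field k] [AddCommGroup V] [Module k V]
    (X : Set (Module.End k V)) (hfin : X.Finite)
    (hcomm : ∀ S ∈ X, ∀ T ∈ X, S * T = T * S)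
    (htri : ∀ S ∈ X, Triangularizable S) :
    ∃ (ι : Type v) (r : ι → ι → Prop) (b : Module.Basis ι k V),
      IsWellOrder ι r ∧
        ∀ S ∈ X, ∀ i, S (b i) ∈ Submodule.span k (⇑b '' {j | r j i ∨ j = i}) := by
  have : Finite X := hfin.to_subtype
  obtain ⟨ι, r, b, hr, hb⟩ := Module.End.exists_basis_isTriangular_of_commute
    ((↑) : X → Module.End k V) (fun S T ↦ hcomm S S.2 T T.2)
    fun S ↦ (htri S S.2).splitTorsion_eq_top
  exact ⟨ι, r, b, hr, fun S hS ↦ hb ⟨S, hS⟩⟩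
end

section
/- Let k be an algebraically closed field and V a k-vector space, and give End_k(V) the function topology. Then the set of triangularizable transformations of V is dense in End_k(V), i.e., its closure is all of End_k(V). -/
universe u v

open Polynomial

/-- The function (finite) topology on `End_k(V)`: the topology induced from the product
topology on `V → V`, where `V` carries the discrete topology. -/
def endFunctionTopology (k : Type u) (V : Type v) [Field k] [AddCommGroup V] [Module k V] :
    TopologicalSpace (Module.End k V) :=
  TopologicalSpace.induced (fun f => (f : V → V))
    (@Pi.topologicalSpace V (fun _ => V) (fun _ => ⊥))

/-!
Given `T` and a finite set `F ⊆ V`, let `π` be a projection of `V` onto `W = span F`. Then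
`S = T ∘ π` agrees with `T` on `F` and has finite rank. A finite-rank endomorphism `S` is
triangularizable: over an algebraically closed field its restriction to the finite-dimensional
invariant subspace `range S` is triangular in some basis (split off an invariant hyperplane,
the kernel of an eigenvector of the transpose, and induct), and any extension of that basis to
`V` works once the new vectors are ordered after the old ones, because `S` maps them into
`range S`.
-/

open Module Submodule

theorem Module.Basis.sumExtend_apply_inl {K V ι : Type*} [DivisionRing K] [AddCommGroup V]
    [Module K V] {v : ι → V} (hv : LinearIndependent K v) (i : ι) :
    Basis.sumExtend hv (Sum.inl i) = v i := by
  simp only [Basis.sumExtend, Basis.reindex_apply, Basis.coe_extend]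
  rfl

theorem LinearMap.exists_finiteDimensional_range_eqOn {K V V₂ : Type*} [DivisionRing K]
    [AddCommGroup V] [Module K V] [AddCommGroup V₂] [Module K V₂] (T : V →ₗ[K] V₂)
    (W : Submodule K V) [FiniteDimensional K W] :
    ∃ S : V →ₗ[K] V₂, FiniteDimensional K (range S) ∧ ∀ x ∈ W, S x = T x := by
  obtain ⟨C, hC⟩ := W.exists_isCompl
  refine ⟨T ∘ₗ W.projection C hC, ?_, fun x hx => ?_⟩
  · rw [range_comp, range_projection]
    infer_instance
  · rw [comp_apply, projection_apply_left hC ⟨x, hx⟩]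

theorem Module.End.exists_invariant_hyperplane {K V : Type*} [Field K] [IsAlgClosed K]
    [AddCommGroup V] [Module K V] [FiniteDimensional K V] [Nontrivial V] (f : End K V) :
    ∃ φ : Dual K V, φ ≠ 0 ∧ ∀ x ∈ LinearMap.ker φ, f x ∈ LinearMap.ker φ := by
  obtain ⟨μ, hμ⟩ := exists_eigenvalue f.dualMap
  obtain ⟨φ, hφ⟩ := hμ.exists_hasEigenvector
  refine ⟨φ, hφ.2, fun x hx => ?_⟩
  have hφf : φ (f x) = μ * φ x := by simpa using LinearMap.congr_fun hφ.apply_eq_smul x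
  rw [LinearMap.mem_ker] at hx ⊢
  rw [hφf, hx, mul_zero]

theorem Module.Dual.exists_basis_cons_ker {K V : Type*} [DivisionRing K] [AddCommGroup V]
    [Module K V] {φ : Dual K V} {y : V} (hy : φ y ≠ 0) {n : ℕ}
    (b : Basis (Fin n) K (LinearMap.ker φ)) :
    ∃ c : Basis (Fin (n + 1)) K V, ⇑c = Fin.cons y (Subtype.val ∘ b) := by
  have hli : ∀ (c : K), ∀ x ∈ LinearMap.ker φ, c • y + x = 0 → c = 0 := fun c x hx hcx => by
    simpa [LinearMap.mem_ker.mp hx, hy] using congr_arg φ hcx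
  have hsp : ∀ z, ∃ c : K, z + c • y ∈ LinearMap.ker φ := fun z =>
    ⟨-(φ z * (φ y)⁻¹), by simp [hy]⟩
  exact ⟨Basis.mkFinCons y b hli hsp, Basis.coe_mkFinCons y b hli hsp⟩

theorem Module.End.exists_lowerTriangular_finBasis {K V : Type*} [Field K] [IsAlgClosed K]
    [AddCommGroup V] [Module K V] [FiniteDimensional K V] (f : End K V) :
    ∃ b : Basis (Fin (finrank K V)) K V, ∀ i, f (b i) ∈ span K (b '' Set.Ici i) := by
  induction h : finrank K V generalizing V with
  | zero =>
    have : Subsingleton V := finrank_zero_iff.mp h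
    exact ⟨Basis.empty V, finZeroElim⟩
  | succ n ih =>
    have : Nontrivial V := finrank_pos_iff.mp (by rw [h]; exact n.succ_pos)
    obtain ⟨φ, hφ, hf⟩ := f.exists_invariant_hyperplane
    have hrank : finrank K (LinearMap.ker φ) = n := by
      have := Dual.finrank_ker_add_one_of_ne_zero hφ
      omega
    obtain ⟨b', hb'⟩ := ih (f.restrict hf) hrank
    obtain ⟨y, hy⟩ : ∃ y, φ y ≠ 0 := by
      by_contra! h
      exact hφ (LinearMap.ext h)
    obtain ⟨b, hb⟩ := Dual.exists_basis_cons_ker hy b'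
    have hb_succ : ∀ j, b j.succ = b' j := by simp [hb]
    refine ⟨b, fun i => ?_⟩
    induction i using Fin.cases with
    | zero =>
      rw [show Set.Ici (0 : Fin (n + 1)) = Set.univ from Set.eq_univ_of_forall Fin.zero_le,
        Set.image_univ, Basis.span_eq]
      trivial
    | succ i =>
      have hfi : f (b' i) ∈ span K ((LinearMap.ker φ).subtype '' (b' '' Set.Ici i)) := by
        rw [← map_span]
        exact mem_map_of_mem (hb' i)
      rw [hb_succ]
      refine span_mono ?_ hfi
      rintro _ ⟨_, ⟨j, hj, rfl⟩, rfl⟩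
      exact ⟨j.succ, Fin.succ_le_succ_iff.mpr hj, hb_succ j⟩

section

variable {k : Type u} {V : Type v} [Field k] [AddCommGroup V] [Module k V] {T : End k V}

theorem triangularizable_of_basis {ι : Type*} {r : ι → ι → Prop} [IsWellOrder ι r]
    (b : Basis ι k V) (hb : ∀ i, T (b i) ∈ span k (b '' {j | r j i ∨ j = i})) :
    Triangularizable T := by
  set e := Equiv.ofInjective b b.injective
  refine ⟨Set.range b, e.symm ⁻¹'o r, b.reindex e,
    (RelIso.preimage e.symm r).toRelEmbedding.isWellOrder, fun x => ?_⟩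
  obtain ⟨i, rfl⟩ := e.surjective x
  rw [Basis.reindex_apply, e.symm_apply_apply]
  convert hb i using 2
  rw [Basis.coe_reindex, Set.image_comp, e.image_symm_eq_preimage]
  simp [Order.Preimage]

theorem triangularizable_of_range_le {U : Submodule k V} (hTU : LinearMap.range T ≤ U)
    (h : Triangularizable (T.restrict fun x _ => hTU (LinearMap.mem_range_self T x))) :
    Triangularizable T := by
  obtain ⟨ι, r, b₀, _, hb₀⟩ := h
  have hv : LinearIndependent k (U.subtype ∘ b₀) :=
    b₀.linearIndependent.map' U.subtype U.ker_subtype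
  set b := Basis.sumExtend hv
  have hspan : ∀ s, map U.subtype (span k (b₀ '' s)) = span k (b '' (Sum.inl '' s)) := by
    intro s
    rw [map_span, Set.image_image, Set.image_image]
    simp only [b, Basis.sumExtend_apply_inl, Function.comp_apply]
  refine ⟨_, Sum.Lex r WellOrderingRel, b, inferInstance, ?_⟩
  rintro (i | j)
  · have hmem := mem_map_of_mem (f := U.subtype) (hb₀ i)
    rw [hspan] at hmem
    rw [Basis.sumExtend_apply_inl]
    refine span_mono (Set.image_mono ?_) hmem
    rintro _ ⟨j, hj | rfl, rfl⟩
    exacts [Or.inl (Sum.Lex.inl hj), Or.inr rfl]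
  · have hmem : T (b (.inr j)) ∈ span k (b '' (Sum.inl '' Set.univ)) := by
      rw [← hspan, Set.image_univ, b₀.span_eq, Submodule.map_top, range_subtype]
      exact hTU (LinearMap.mem_range_self T _)
    refine span_mono (Set.image_mono ?_) hmem
    rintro _ ⟨i, -, rfl⟩
    exact Or.inl (Sum.Lex.sep _ _)

theorem triangularizable_of_finiteDimensional [IsAlgClosed k] [FiniteDimensional k V]
    (T : End k V) : Triangularizable T := by
  obtain ⟨b, hb⟩ := T.exists_lowerTriangular_finBasis
  refine triangularizable_of_basis (r := (· > ·)) b fun i => span_mono ?_ (hb i)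
  exact Set.image_mono fun j hj => (lt_or_eq_of_le hj).imp id Eq.symm

theorem triangularizable_of_finiteDimensional_range [IsAlgClosed k] (T : End k V)
    [FiniteDimensional k (LinearMap.range T)] : Triangularizable T :=
  triangularizable_of_range_le le_rfl (triangularizable_of_finiteDimensional _)

theorem mem_closure_endFunctionTopology {s : Set (End k V)}
    (h : ∀ F : Finset V, ∃ S ∈ s, ∀ x ∈ F, S x = T x) :
    T ∈ @closure _ (endFunctionTopology k V) s := by
  let _ : TopologicalSpace V := ⊥
  let _ : TopologicalSpace (End k V) := endFunctionTopology k V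
  rw [_root_.mem_closure_iff]
  intro o ho hTo
  obtain ⟨O, hO, rfl⟩ := isOpen_induced_iff.mp ho
  obtain ⟨F, u, hu, hsub⟩ := isOpen_pi_iff.mp hO T hTo
  obtain ⟨S, hS, hST⟩ := h F
  refine ⟨S, hsub fun x hx => ?_, hS⟩
  change S x ∈ u x
  exact hST x hx ▸ (hu x hx).2

end

/-- Over an algebraically closed field, the set of triangularizable transformations is dense
in `End_k(V)` with the function topology. -/
theorem closure_triangularizable_eq_univ
    {k : Type u} {V : Type v} [Field k] [IsAlgClosed k] [AddCommGroup V] [Module k V] :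
    @closure _ (endFunctionTopology k V) {S : Module.End k V | Triangularizable S} =
      Set.univ := by
  refine Set.eq_univ_of_forall fun T => mem_closure_endFunctionTopology fun F => ?_
  obtain ⟨S, _, hST⟩ := T.exists_finiteDimensional_range_eqOn (span k (F : Set V))
  exact ⟨S, triangularizable_of_finiteDimensional_range S, fun x hx => hST x (subset_span hx)⟩
end
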